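/- arXiv:1701.04812 — 6 statements merged into one kernel-verified Lean document; each statement's English description precedes it below -/
import Mathlib

section
/- Let α : ℝ → ℝ³ be a unit-speed Frenet curve with frame (T, N, B), curvature κ > 0 and torsion τ, and suppose a, b, c are smooth functions with a² + b² + c² = 1 such that the integral curve β of X = aT + bN + cB has principal normal N̄ equal to B (the binormal of α) and nonvanishing curvature κ̄. Then c ≡ 0. -/
open Real
open scoped RealInnerProductSpace

theorem stmt_9 (α T N B β : ℝ → EuclideanSpace ℝ (Fin 3)) (κ τ a b c κbar : ℝ → ℝ)
    (hα : ∀ s, HasDerivAt α (T s) s)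
    (hT : ∀ s, ‖T s‖ = 1) (hN : ∀ s, ‖N s‖ = 1) (hB : ∀ s, ‖B s‖ = 1)
    (hTN : ∀ s, ⟪T s, N s⟫ = 0) (hTB : ∀ s, ⟪T s, B s⟫ = 0)
    (hNB : ∀ s, ⟪N s, B s⟫ = 0)
    (hκ : ∀ s, 0 < κ s)
    (hT' : ∀ s, HasDerivAt T (κ s • N s) s)
    (hN' : ∀ s, HasDerivAt N ((-κ s) • T s + τ s • B s) s)
    (hB' : ∀ s, HasDerivAt B ((-τ s) • N s) s)
    (ha : ContDiff ℝ (⊤ : ℕ∞) a) (hb : ContDiff ℝ (⊤ : ℕ∞) b) (hc : ContDiff ℝ (⊤ : ℕ∞) c)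
    (hunit : ∀ s, a s ^ 2 + b s ^ 2 + c s ^ 2 = 1)
    (hβ : ∀ s, HasDerivAt β (a s • T s + b s • N s + c s • B s) s)
    (hβ'' : ∀ s, HasDerivAt (fun u => a u • T u + b u • N u + c u • B u)
      (κbar s • B s) s)
    (hκbar : ∀ s, κbar s ≠ 0) :
    ∀ s, c s = 0 := by
  intro s
  set g : ℝ → EuclideanSpace ℝ (Fin 3) := fun u => a u • T u + b u • N u + c u • B u with hg
  have hTT : ∀ u, ⟪T u, T u⟫ = 1 := fun u => by
    rw [real_inner_self_eq_norm_sq, hT u]; norm_num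
  have hNN : ∀ u, ⟪N u, N u⟫ = 1 := fun u => by
    rw [real_inner_self_eq_norm_sq, hN u]; norm_num
  have hBB : ∀ u, ⟪B u, B u⟫ = 1 := fun u => by
    rw [real_inner_self_eq_norm_sq, hB u]; norm_num
  have hNT : ∀ u, ⟪N u, T u⟫ = 0 := fun u => by rw [real_inner_comm]; exact hTN u
  have hBT : ∀ u, ⟪B u, T u⟫ = 0 := fun u => by rw [real_inner_comm]; exact hTB u
  have hBN : ∀ u, ⟪B u, N u⟫ = 0 := fun u => by rw [real_inner_comm]; exact hNB u
  have hgT : ∀ u, ⟪g u, T u⟫ = a u := fun u => by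
    show ⟪a u • T u + b u • N u + c u • B u, T u⟫ = a u
    rw [inner_add_left, inner_add_left, real_inner_smul_left, real_inner_smul_left,
      real_inner_smul_left, hTT u, hNT u, hBT u]; ring
  have hgN : ∀ u, ⟪g u, N u⟫ = b u := fun u => by
    show ⟪a u • T u + b u • N u + c u • B u, N u⟫ = b u
    rw [inner_add_left, inner_add_left, real_inner_smul_left, real_inner_smul_left,
      real_inner_smul_left, hNN u, hTN u, hBN u]; ring
  have hgB : ∀ u, ⟪g u, B u⟫ = c u := fun u => by
    show ⟪a u • T u + b u • N u + c u • B u, B u⟫ = c u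
    rw [inner_add_left, inner_add_left, real_inner_smul_left, real_inner_smul_left,
      real_inner_smul_left, hBB u, hTB u, hNB u]; ring
  have hda : HasDerivAt a (b s * κ s) s := by
    have h := HasDerivAt.inner ℝ (hβ'' s) (hT' s)
    have h2 : HasDerivAt a (⟪g s, κ s • N s⟫ + ⟪κbar s • B s, T s⟫) s :=
      h.congr_of_eventuallyEq (Filter.Eventually.of_forall fun u => (hgT u).symm)
    convert h2 using 1
    rw [real_inner_smul_right, real_inner_smul_left, hgN s, hBT s]; ring
  have hdb : HasDerivAt b (c s * τ s - a s * κ s) s := by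
    have h := HasDerivAt.inner ℝ (hβ'' s) (hN' s)
    have h2 : HasDerivAt b (⟪g s, (-κ s) • T s + τ s • B s⟫ + ⟪κbar s • B s, N s⟫) s :=
      h.congr_of_eventuallyEq (Filter.Eventually.of_forall fun u => (hgN u).symm)
    convert h2 using 1
    rw [inner_add_right, real_inner_smul_right, real_inner_smul_right, real_inner_smul_left,
      hgT s, hgB s, hBN s]; ring
  have hdc : HasDerivAt c (κbar s - b s * τ s) s := by
    have h := HasDerivAt.inner ℝ (hβ'' s) (hB' s)
    have h2 : HasDerivAt c (⟪g s, (-τ s) • N s⟫ + ⟪κbar s • B s, B s⟫) s :=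
      h.congr_of_eventuallyEq (Filter.Eventually.of_forall fun u => (hgB u).symm)
    convert h2 using 1
    rw [real_inner_smul_right, real_inner_smul_left, hgN s, hBB s]; ring
  have hsum : HasDerivAt (fun u => a u ^ 2 + b u ^ 2 + c u ^ 2)
      (2 * a s * (b s * κ s) + 2 * b s * (c s * τ s - a s * κ s)
        + 2 * c s * (κbar s - b s * τ s)) s := by
    have := ((hda.pow 2).add (hdb.pow 2)).add (hdc.pow 2)
    refine this.congr_deriv ?_
    norm_num
  have hzero : HasDerivAt (fun u => a u ^ 2 + b u ^ 2 + c u ^ 2) 0 s :=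
    (hasDerivAt_const s (1:ℝ)).congr_of_eventuallyEq
      (Filter.Eventually.of_forall fun u => hunit u)
  have huniq := hsum.unique hzero
  have : 2 * c s * κbar s = 0 := by linarith [huniq]; 
  rcases mul_eq_zero.mp this with h | h
  · rcases mul_eq_zero.mp h with h' | h'
    · norm_num at h'
    · exact h'
  · exact absurd h (hκbar s)
end

section
/- Let α be a unit-speed Frenet curve in ℝ³ with Frenet apparatus (T, N, B, κ, τ), κ > 0. Set φ(s) = ∫₀ˢ κ du and let β satisfy β' = sin(φ)T + cos(φ)N. Then β'' = (τ cos φ) B; hence the curvature of β is κ̄ = |τ cos φ| and, where τ cos φ ≠ 0, the principal normal of β is ±B. -/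
open Real MeasureTheory Filter Set intervalIntegral
open scoped RealInnerProductSpace

set_option maxHeartbeats 1000000 in
private lemma aux_ctrl (N : ℝ → EuclideanSpace ℝ (Fin 3)) (hNc : Continuous N)
    (hN : ∀ s, ‖N s‖ = 1) (x : ℝ) (ε : ℝ) (hε : 0 < ε) :
    ∃ δ > 0, ∀ u, |u - x| < δ → 1 - ε ≤ ⟪N x, N u⟫ := by
  have hc : Continuous (fun u => (⟪N x, N u⟫ : ℝ)) := (innerSL ℝ (N x)).continuous.comp hNc
  have hx : (⟪N x, N x⟫ : ℝ) = 1 := by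
    rw [real_inner_self_eq_norm_sq, hN, one_pow]
  obtain ⟨δ, hδ, H⟩ := Metric.continuous_iff.mp hc x ε hε
  refine ⟨δ, hδ, fun u hu => ?_⟩
  have := H u (by rwa [Real.dist_eq])
  rw [Real.dist_eq, hx] at this
  have := abs_lt.mp this
  linarith [this.1]

set_option maxHeartbeats 1000000 in
private lemma aux_locint (T N : ℝ → EuclideanSpace ℝ (Fin 3)) (κ : ℝ → ℝ)
    (hN : ∀ s, ‖N s‖ = 1) (hκ : ∀ s, 0 < κ s)
    (hT' : ∀ s, HasDerivAt T (κ s • N s) s) (hNc : Continuous N) (hTc : Continuous T)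
    (hκm : Measurable κ) (x : ℝ) : IntegrableAtFilter κ (nhds x) volume := by
  obtain ⟨δ, hδ, H⟩ := aux_ctrl N hNc hN x (1/2) (by norm_num)
  set g' : ℝ → ℝ := fun u => κ u * ⟪N x, N u⟫ with hg'def
  have hg : ∀ u, HasDerivAt (fun t => (⟪N x, T t⟫ : ℝ)) (g' u) u := by
    intro u
    simpa [inner_smul_right, Function.comp_def] using ((innerSL ℝ (N x)).hasFDerivAt.comp_hasDerivAt u (hT' u))
  have hmem : ∀ u, u ∈ Icc (x - δ/2) (x + δ/2) → |u - x| < δ := by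
    intro u hu; rw [abs_lt]; exact ⟨by linarith [hu.1], by linarith [hu.2]⟩
  have hgint : IntervalIntegrable g' volume (x - δ/2) (x + δ/2) := by
    apply intervalIntegrable_deriv_of_nonneg
    · exact ((innerSL ℝ (N x)).continuous.comp hTc).continuousOn
    · intro t ht; exact hg t
    · intro t ht
      have h1 : |t - x| < δ := by
        apply hmem
        rw [min_eq_left (by linarith), max_eq_right (by linarith)] at ht
        exact ⟨ht.1.le, ht.2.le⟩
      have h2 := H t h1
      have h3 := (hκ t).le
      show (0:ℝ) ≤ κ t * ⟪N x, N t⟫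
      nlinarith
  have hgI : IntegrableOn g' (Icc (x - δ/2) (x + δ/2)) volume := by
    rw [integrableOn_Icc_iff_integrableOn_Ioc]
    exact (intervalIntegrable_iff_integrableOn_Ioc_of_le (by linarith)).mp hgint
  have hκI : IntegrableOn κ (Icc (x - δ/2) (x + δ/2)) volume := by
    apply Integrable.mono' (hgI.smul (2:ℝ)) (hκm.aestronglyMeasurable)
    filter_upwards [ae_restrict_mem measurableSet_Icc] with t ht
    have h1 := H t (hmem t ht)
    have h2 := (hκ t).le
    rw [Real.norm_eq_abs, abs_of_nonneg h2]
    simp only [Pi.smul_apply, smul_eq_mul, hg'def]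
    nlinarith [mul_nonneg h2 (by linarith : (0:ℝ) ≤ 2*⟪N x, N t⟫ - 1)]
  exact ⟨Icc (x - δ/2) (x + δ/2), Icc_mem_nhds (by linarith) (by linarith), hκI⟩

set_option maxHeartbeats 1000000 in
private lemma aux_phideriv (T N : ℝ → EuclideanSpace ℝ (Fin 3)) (κ : ℝ → ℝ)
    (hN : ∀ s, ‖N s‖ = 1) (hκ : ∀ s, 0 < κ s)
    (hT' : ∀ s, HasDerivAt T (κ s • N s) s) (hNc : Continuous N)
    (hInt : ∀ a b : ℝ, IntervalIntegrable κ volume a b)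
    (φ : ℝ → ℝ) (hφ : ∀ s, φ s = ∫ u in (0:ℝ)..s, κ u)
    (s : ℝ) : HasDerivAt φ (κ s) s := by
  have hctrl := aux_ctrl N hNc hN
  set c : ℝ → ℝ := fun t => ⟪N s, N t⟫ with hcdef
  have hcc : Continuous c := (innerSL ℝ (N s)).continuous.comp hNc
  have hc1 : ∀ t, c t ≤ 1 := by
    intro t
    have := real_inner_le_norm (N s) (N t)
    rwa [hN, hN, mul_one] at this
  have hg : ∀ u, HasDerivAt (fun t => (⟪N s, T t⟫ : ℝ)) (κ u * c u) u := by
    intro u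
    simpa [inner_smul_right, Function.comp_def] using ((innerSL ℝ (N s)).hasFDerivAt.comp_hasDerivAt u (hT' u))
  set g : ℝ → ℝ := fun t => ⟪N s, T t⟫ with hgdef
  have hcs : c s = 1 := by
    simp only [hcdef]
    rw [real_inner_self_eq_norm_sq, hN, one_pow]
  have hGtend : Tendsto (slope g s) (nhdsWithin s {y | y ≠ s}) (nhds (κ s)) := by
    have := hasDerivAt_iff_tendsto_slope.mp (hg s)
    rwa [hcs, mul_one] at this
  rw [hasDerivAt_iff_tendsto_slope]
  rw [Metric.tendsto_nhdsWithin_nhds] at hGtend ⊢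
  intro ε' hε'
  set ε₁ : ℝ := min (ε'/3) 1 with hε₁def
  set ε : ℝ := min (1/2) (ε'/(4*(κ s + 1))) with hεdef
  have hκs := hκ s
  have hε₁pos : 0 < ε₁ := lt_min (by linarith) one_pos
  have hεpos : 0 < ε := lt_min (by norm_num) (by positivity)
  have hεhalf : ε ≤ 1/2 := min_le_left _ _
  have hεsmall : ε ≤ ε'/(4*(κ s + 1)) := min_le_right _ _
  obtain ⟨δ₀, hδ₀, H₀⟩ := hctrl s ε hεpos
  obtain ⟨δ₁, hδ₁, H₁⟩ := hGtend ε₁ hε₁pos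
  refine ⟨min δ₀ δ₁, lt_min hδ₀ hδ₁, ?_⟩
  intro u hu hdist
  have hune : u ≠ s := hu
  have hus : u - s ≠ 0 := sub_ne_zero.mpr hune
  have hd₀ : |u - s| < δ₀ := lt_of_lt_of_le (by rwa [Real.dist_eq] at hdist) (min_le_left _ _)
  have hd₁ : dist u s < δ₁ := lt_of_lt_of_le hdist (min_le_right _ _)
  have hG := H₁ hu hd₁
  rw [Real.dist_eq] at hG ⊢
  have hg'int : IntervalIntegrable (fun t => κ t * c t) volume s u :=
    (hInt s u).mul_continuousOn hcc.continuousOn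
  have hFTC : (∫ t in s..u, κ t * c t) = g u - g s :=
    integral_eq_sub_of_hasDerivAt (fun t _ => hg t) hg'int
  have key : ∀ a b : ℝ, a ≤ b → (∀ t ∈ Icc a b, |t - s| < δ₀) →
      |∫ t in a..b, (κ t - κ t * c t)| ≤ ε * ∫ t in a..b, κ t := by
    intro a b hab hmem
    have hiab : IntervalIntegrable κ volume a b := hInt a b
    have hicab : IntervalIntegrable (fun t => κ t * c t) volume a b :=
      hiab.mul_continuousOn hcc.continuousOn
    have hsubint : IntervalIntegrable (fun t => κ t - κ t * c t) volume a b := hiab.sub hicab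
    calc |∫ t in a..b, (κ t - κ t * c t)| ≤ ∫ t in a..b, |κ t - κ t * c t| :=
          intervalIntegral.abs_integral_le_integral_abs hab
      _ ≤ ∫ t in a..b, ε * κ t := by
          apply intervalIntegral.integral_mono_on hab hsubint.abs (hiab.const_mul ε)
          intro t ht
          have h1 := H₀ t (hmem t ht)
          have h2 := (hκ t).le
          have h3 := hc1 t
          rw [abs_of_nonneg (by nlinarith)]
          nlinarith
      _ = ε * ∫ t in a..b, κ t := intervalIntegral.integral_const_mul ε κ
  set A : ℝ := ∫ t in s..u, κ t with hAdef
  have hsub : A - (g u - g s) = ∫ t in s..u, (κ t - κ t * c t) := by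
    rw [← hFTC, hAdef, intervalIntegral.integral_sub (hInt s u) hg'int]
  have habs : |A - (g u - g s)| ≤ ε * |A| := by
    rcases le_total s u with h | h
    · have hmem : ∀ t ∈ Icc s u, |t - s| < δ₀ := by
        intro t ht
        rw [abs_lt] at hd₀ ⊢
        constructor <;> [linarith [ht.1]; linarith [ht.2, hd₀.1, hd₀.2]]
      have hA0 : 0 ≤ A := intervalIntegral.integral_nonneg h (fun t _ => (hκ t).le)
      rw [hsub, abs_of_nonneg hA0] at *
      exact key s u h hmem
    · have hmem : ∀ t ∈ Icc u s, |t - s| < δ₀ := by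
        intro t ht
        rw [abs_lt] at hd₀ ⊢
        constructor <;> [linarith [ht.1, hd₀.1, hd₀.2]; linarith [ht.2]]
      have hAneg : A = -∫ t in u..s, κ t := by
        rw [hAdef, intervalIntegral.integral_symm]
      have hA0 : 0 ≤ ∫ t in u..s, κ t := intervalIntegral.integral_nonneg h (fun t _ => (hκ t).le)
      have hsym : (∫ t in s..u, (κ t - κ t * c t)) = -∫ t in u..s, (κ t - κ t * c t) :=
        intervalIntegral.integral_symm u s
      rw [hsub, hsym, abs_neg, hAneg, abs_neg, abs_of_nonneg hA0]
      exact key u s h hmem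
  have hA : A = φ u - φ s := by
    have := intervalIntegral.integral_add_adjacent_intervals (hInt 0 s) (hInt s u)
    rw [hφ u, hφ s, hAdef]
    linarith
  rw [slope_def_field]
  have hGslope : slope g s u = (g u - g s) / (u - s) := slope_def_field g s u
  rw [hGslope] at hG
  set E : ℝ := (φ u - φ s) / (u - s) with hEdef
  set G : ℝ := (g u - g s) / (u - s) with hGdef
  have hEG : |E - G| ≤ ε * |E| := by
    have h1 : E - G = (A - (g u - g s)) / (u - s) := by
      rw [hEdef, hGdef, hA, div_sub_div_same]
    have h2 : |E| = |A| / |u - s| := by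
      rw [hEdef, ← hA, abs_div]
    rw [h1, abs_div, h2, ← mul_div_assoc]
    gcongr
  have hEbound : |E| ≤ 2 * (κ s + ε₁) := by
    have h1 : |E| ≤ |G| + ε * |E| := by
      have := abs_sub_abs_le_abs_sub E G
      linarith [hEG]
    have h2 : |G| ≤ κ s + ε₁ := by
      have h3 : |G| - |κ s| ≤ |G - κ s| := abs_sub_abs_le_abs_sub G (κ s)
      rw [abs_of_pos hκs] at h3
      linarith [hG]
    nlinarith [abs_nonneg E]
  have hε₁small : ε₁ ≤ ε'/3 := min_le_left _ _
  have hε₁one : ε₁ ≤ 1 := min_le_right _ _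
  calc |E - κ s| ≤ |E - G| + |G - κ s| := abs_sub_le E G (κ s)
    _ ≤ ε * |E| + ε₁ := by linarith [hEG, hG]
    _ ≤ ε * (2 * (κ s + ε₁)) + ε₁ := by nlinarith [hεpos.le, hEbound]
    _ < ε' := by
        have h4 : ε * (4*(κ s + 1)) ≤ ε' := (le_div_iff₀ (by positivity)).mp hεsmall
        have h5 : ε * ε₁ ≤ ε * 1 := mul_le_mul_of_nonneg_left hε₁one hεpos.le
        linarith

set_option maxHeartbeats 1000000 in
theorem stmt_10 (α T N B β : ℝ → EuclideanSpace ℝ (Fin 3)) (κ τ : ℝ → ℝ)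
    (hα : ∀ s, HasDerivAt α (T s) s)
    (hT : ∀ s, ‖T s‖ = 1) (hN : ∀ s, ‖N s‖ = 1) (hB : ∀ s, ‖B s‖ = 1)
    (hTN : ∀ s, ⟪T s, N s⟫ = 0) (hTB : ∀ s, ⟪T s, B s⟫ = 0)
    (hNB : ∀ s, ⟪N s, B s⟫ = 0)
    (hκ : ∀ s, 0 < κ s)
    (hT' : ∀ s, HasDerivAt T (κ s • N s) s)
    (hN' : ∀ s, HasDerivAt N ((-κ s) • T s + τ s • B s) s)
    (hB' : ∀ s, HasDerivAt B ((-τ s) • N s) s)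
    (φ : ℝ → ℝ) (hφ : ∀ s, φ s = ∫ u in (0:ℝ)..s, κ u)
    (hβ : ∀ s, HasDerivAt β (Real.sin (φ s) • T s + Real.cos (φ s) • N s) s) :
    ∀ s, HasDerivAt (fun u => Real.sin (φ u) • T u + Real.cos (φ u) • N u)
        ((τ s * Real.cos (φ s)) • B s) s ∧
      ‖(τ s * Real.cos (φ s)) • B s‖ = |τ s * Real.cos (φ s)| ∧
      (τ s * Real.cos (φ s) ≠ 0 →
        (‖(τ s * Real.cos (φ s)) • B s‖⁻¹ • ((τ s * Real.cos (φ s)) • B s) = B s ∨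
         ‖(τ s * Real.cos (φ s)) • B s‖⁻¹ • ((τ s * Real.cos (φ s)) • B s) = -B s)) := by
  -- continuity
  have hTc : Continuous T := by
    rw [continuous_iff_continuousAt]; exact fun u => (hT' u).continuousAt
  have hNc : Continuous N := by
    rw [continuous_iff_continuousAt]; exact fun u => (hN' u).continuousAt
  -- measurability of κ
  have hκm : Measurable κ := by
    have h : κ = fun u => (⟪deriv T u, N u⟫ : ℝ) := by
      funext u
      rw [(hT' u).deriv, real_inner_smul_left, real_inner_self_eq_norm_sq, hN, one_pow, mul_one]
    rw [h]
    exact (measurable_deriv T).inner hNc.measurable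
  -- global interval integrability
  have hLoc : MeasureTheory.LocallyIntegrable κ volume :=
    fun x => aux_locint T N κ hN hκ hT' hNc hTc hκm x
  have hInt : ∀ a b : ℝ, IntervalIntegrable κ volume a b := fun a b =>
    (hLoc.integrableOn_isCompact isCompact_uIcc).intervalIntegrable
  -- derivative of φ
  have hφ' : ∀ s, HasDerivAt φ (κ s) s :=
    aux_phideriv T N κ hN hκ hT' hNc hInt φ hφ
  intro s
  refine ⟨?_, ?_, ?_⟩
  · -- main derivative computation
    have hsin : HasDerivAt (fun u => Real.sin (φ u)) (Real.cos (φ s) * κ s) s :=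
      (Real.hasDerivAt_sin (φ s)).comp s (hφ' s)
    have hcos : HasDerivAt (fun u => Real.cos (φ u)) (-Real.sin (φ s) * κ s) s :=
      (Real.hasDerivAt_cos (φ s)).comp s (hφ' s)
    have H := (hsin.smul (hT' s)).add (hcos.smul (hN' s))
    refine H.congr_deriv ?_
    module
  · rw [norm_smul, hB, mul_one, Real.norm_eq_abs]
  · intro hc
    rw [norm_smul, hB, mul_one, Real.norm_eq_abs, smul_smul]
    rcases hc.lt_or_gt with h | h
    · right
      rw [abs_of_neg h]
      rw [show (-(τ s * Real.cos (φ s)))⁻¹ * (τ s * Real.cos (φ s)) = -1 by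
        field_simp; rw [div_self hc]]
      rw [neg_one_smul]
    · left
      rw [abs_of_pos h, inv_mul_cancel₀ (ne_of_gt h), one_smul]
end

section
/- Let κ, τ : ℝ → ℝ be smooth with τ > 0, φ = ∫₀ˢ κ du with cos φ > 0 on an interval, and set κ̄ = τ cos φ, τ̄ = τ sin φ. Then on that interval κ = (κ̄²/(κ̄² + τ̄²))·(τ̄/κ̄)'. -/
open Real

theorem stmt_12 (κ τ φ κbar τbar : ℝ → ℝ) (a b : ℝ)
    (hκs : ContDiff ℝ (⊤ : ℕ∞) κ) (hτs : ContDiff ℝ (⊤ : ℕ∞) τ)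
    (hτ : ∀ s, 0 < τ s)
    (hφ : ∀ s, φ s = ∫ u in (0:ℝ)..s, κ u)
    (hcos : ∀ s ∈ Set.Ioo a b, 0 < Real.cos (φ s))
    (hκbar : ∀ s, κbar s = τ s * Real.cos (φ s))
    (hτbar : ∀ s, τbar s = τ s * Real.sin (φ s)) :
    ∀ s ∈ Set.Ioo a b,
      κ s = (κbar s ^ 2 / (κbar s ^ 2 + τbar s ^ 2)) *
        deriv (fun u => τbar u / κbar u) s := by
  intro s hs
  have hcs : Real.cos (φ s) ≠ 0 := ne_of_gt (hcos s hs)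
  -- the quotient function equals tan ∘ φ
  have hfun : (fun u => τbar u / κbar u) = fun u => Real.tan (φ u) := by
    funext u
    rw [hτbar, hκbar, Real.tan_eq_sin_div_cos,
      mul_div_mul_left _ _ (ne_of_gt (hτ u))]
  -- derivative of φ
  have hφd : HasDerivAt φ (κ s) s := by
    have h1 : HasDerivAt (fun x => ∫ u in (0:ℝ)..x, κ u) (κ s) s :=
      intervalIntegral.integral_hasDerivAt_right
        (hκs.continuous.intervalIntegrable _ _)
        (hκs.continuous.stronglyMeasurableAtFilter _ _)
        hκs.continuous.continuousAt
    have : φ = fun x => ∫ u in (0:ℝ)..x, κ u := funext hφ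
    rw [this]; exact h1
  have htan : HasDerivAt (fun u => Real.tan (φ u)) (1 / Real.cos (φ s) ^ 2 * κ s) s :=
    (Real.hasDerivAt_tan hcs).comp s hφd
  rw [hfun, htan.deriv, hκbar, hτbar]
  have hτs' := ne_of_gt (hτ s)
  field_simp
  linear_combination κ s * Real.sin_sq_add_cos_sq (φ s)
end

section
/- Let α be a unit-speed Frenet curve with κ > 0, τ > 0, cos(∫κ) > 0, and let β be its Mannheim-direction curve with κ̄ = τ cos(∫κ), τ̄ = τ sin(∫κ). Then κ/τ = (κ̄²/(κ̄² + τ̄²)^{3/2})·(τ̄/κ̄)'. Consequently, τ/κ is constant if and only if (κ̄²/(κ̄²+τ̄²)^{3/2})(τ̄/κ̄)' is constant, i.e. α is a general helix iff β is a slant helix. -/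
open Real MeasureTheory intervalIntegral Set Filter Asymptotics
open scoped RealInnerProductSpace Topology Interval

private lemma frenet_locInt {T N B : ℝ → EuclideanSpace ℝ (Fin 3)} {κ τ : ℝ → ℝ}
    (hN : ∀ s, ‖N s‖ = 1) (hκ : ∀ s, 0 < κ s)
    (hT' : ∀ s, HasDerivAt T (κ s • N s) s)
    (hN' : ∀ s, HasDerivAt N ((-κ s) • T s + τ s • B s) s) (s₀ : ℝ) :
    MeasureTheory.IntegrableAtFilter κ (𝓝 s₀) MeasureTheory.volume := by
  set m : ℝ → ℝ := fun s => ⟪T s, N s₀⟫ with hm_def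
  set q : ℝ → ℝ := fun s => ⟪N s, N s₀⟫ with hq_def
  have hm : ∀ s, HasDerivAt m (κ s * q s) s := by
    intro s
    have h := HasDerivAt.inner ℝ (hT' s) (hasDerivAt_const s (N s₀))
    simpa only [inner_zero_right, zero_add, real_inner_smul_left] using h
  have hq : ∀ s, HasDerivAt q (⟪(-κ s) • T s + τ s • B s, N s₀⟫) s := by
    intro s
    have h := HasDerivAt.inner ℝ (hN' s) (hasDerivAt_const s (N s₀))
    simpa only [inner_zero_right, zero_add] using h
  have hqc : Continuous q := by
    rw [continuous_iff_continuousAt]; exact fun s => (hq s).continuousAt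
  have hq0 : q s₀ = 1 := by
    rw [show q s₀ = ⟪N s₀, N s₀⟫ from rfl, real_inner_self_eq_norm_sq, hN s₀, one_pow]
  have hev : ∀ᶠ u in 𝓝 s₀, 1/2 < q u := by
    have h : Set.Ioi (1/2:ℝ) ∈ 𝓝 (q s₀) := Ioi_mem_nhds (by rw [hq0]; norm_num)
    exact hqc.continuousAt.preimage_mem_nhds h
  obtain ⟨r, hr, hball⟩ := Metric.eventually_nhds_iff.mp hev
  set a := s₀ - r/2 with ha_def
  set b := s₀ + r/2 with hb_def
  have hab : a ≤ b := by simp only [ha_def, hb_def]; linarith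
  have hq_half : ∀ u ∈ Icc a b, 1/2 < q u := by
    intro u hu
    apply hball
    rw [Real.dist_eq, abs_lt]
    obtain ⟨h1, h2⟩ := hu
    constructor
    · simp only [ha_def] at h1; linarith
    · simp only [hb_def] at h2; linarith
  have hIq : IntervalIntegrable (fun u => κ u * q u) volume a b := by
    apply intervalIntegrable_deriv_of_nonneg (g := m)
    · exact fun x _ => (hm x).continuousAt.continuousWithinAt
    · intro x _; exact hm x
    · intro x hx
      rw [min_eq_left hab, max_eq_right hab] at hx
      have h := hq_half x (Ioo_subset_Icc_self hx)
      have := hκ x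
      nlinarith
  have hIκ : IntegrableOn κ (Ι a b) volume := by
    have h1 : IntervalIntegrable (fun u => (κ u * q u) * (q u)⁻¹) volume a b := by
      apply hIq.mul_continuousOn
      apply ContinuousOn.inv₀ hqc.continuousOn
      intro x hx
      rw [uIcc_of_le hab] at hx
      exact ne_of_gt (lt_trans (by norm_num) (hq_half x hx))
    have h2 := intervalIntegrable_iff.mp h1
    apply h2.congr_fun ?_ measurableSet_uIoc
    intro x hx
    have hx' : x ∈ Icc a b := by
      rw [uIoc_of_le hab] at hx; exact Ioc_subset_Icc_self hx
    have hqx : q x ≠ 0 := ne_of_gt (lt_trans (by norm_num) (hq_half x hx'))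
    simp only [mul_inv_cancel_right₀ hqx]
  refine ⟨Ι a b, ?_, hIκ⟩
  rw [uIoc_of_le hab]
  exact Ioc_mem_nhds (by simp only [ha_def]; linarith) (by simp only [hb_def]; linarith)

private lemma frenet_phi_deriv {T N B : ℝ → EuclideanSpace ℝ (Fin 3)} {κ τ : ℝ → ℝ}
    (hN : ∀ s, ‖N s‖ = 1) (hκ : ∀ s, 0 < κ s)
    (hT' : ∀ s, HasDerivAt T (κ s • N s) s)
    (hN' : ∀ s, HasDerivAt N ((-κ s) • T s + τ s • B s) s) (s₀ : ℝ) :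
    HasDerivAt (fun s : ℝ => ∫ u in (0:ℝ)..s, κ u) (κ s₀) s₀ := by
  have hloc : MeasureTheory.LocallyIntegrable κ volume :=
    fun s => frenet_locInt hN hκ hT' hN' s
  have hglob : ∀ x y : ℝ, IntervalIntegrable κ volume x y := by
    intro x y
    rw [intervalIntegrable_iff]
    exact (hloc.integrableOn_isCompact isCompact_uIcc).mono_set Set.Ioc_subset_Icc_self
  set m : ℝ → ℝ := fun s => ⟪T s, N s₀⟫ with hm_def
  set q : ℝ → ℝ := fun s => ⟪N s, N s₀⟫ with hq_def
  have hm : ∀ s, HasDerivAt m (κ s * q s) s := by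
    intro s
    have h := HasDerivAt.inner ℝ (hT' s) (hasDerivAt_const s (N s₀))
    simpa only [inner_zero_right, zero_add, real_inner_smul_left] using h
  have hq : ∀ s, HasDerivAt q (⟪(-κ s) • T s + τ s • B s, N s₀⟫) s := by
    intro s
    have h := HasDerivAt.inner ℝ (hN' s) (hasDerivAt_const s (N s₀))
    simpa only [inner_zero_right, zero_add] using h
  have hqc : Continuous q := by
    rw [continuous_iff_continuousAt]; exact fun s => (hq s).continuousAt
  have hq0 : q s₀ = 1 := by
    rw [show q s₀ = ⟪N s₀, N s₀⟫ from rfl, real_inner_self_eq_norm_sq, hN s₀, one_pow]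
  have hIq : ∀ x y : ℝ, IntervalIntegrable (fun u => κ u * q u) volume x y :=
    fun x y => (hglob x y).mul_continuousOn hqc.continuousOn
  have hftc : ∀ s : ℝ, ∫ u in s₀..s, κ u * q u = m s - m s₀ :=
    fun s => intervalIntegral.integral_eq_sub_of_hasDerivAt (fun x _ => hm x) (hIq s₀ s)
  have hIr : ∀ x y : ℝ, IntervalIntegrable (fun u => κ u * (1 - q u)) volume x y :=
    fun x y => (hglob x y).mul_continuousOn (Continuous.continuousOn (by continuity))
  have hsplit : ∀ s : ℝ, (∫ u in s₀..s, κ u)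
      = (m s - m s₀) + ∫ u in s₀..s, κ u * (1 - q u) := by
    intro s
    rw [← hftc s, ← intervalIntegral.integral_add (hIq s₀ s) (hIr s₀ s)]
    congr 1; funext u; ring
  have hG : HasDerivAt (fun s => ∫ u in s₀..s, κ u) (κ s₀) s₀ := by
    rw [hasDerivAt_iff_isLittleO]
    have h1 : (fun s => m s - m s₀ - (s - s₀) • (κ s₀ * q s₀)) =o[𝓝 s₀] fun s => s - s₀ :=
      hasDerivAt_iff_isLittleO.mp (hm s₀)
    rw [hq0, mul_one] at h1
    have h2a : (fun s => m s - m s₀) =O[𝓝 s₀] fun s => s - s₀ :=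
      (hm s₀).hasFDerivAt.isBigO_sub
    have h2b : (fun s => ∫ u in s₀..s, κ u * (1 - q u)) =o[𝓝 s₀] fun s => m s - m s₀ := by
      rw [Asymptotics.isLittleO_iff]
      intro c hc
      have hev : ∀ᶠ u in 𝓝 s₀, |q u - 1| < min (c/2) (1/2) := by
        have h : Metric.ball (1:ℝ) (min (c/2) (1/2)) ∈ 𝓝 (q s₀) := by
          rw [hq0]; exact Metric.ball_mem_nhds _ (by positivity)
        filter_upwards [hqc.continuousAt.preimage_mem_nhds h] with u hu
        simpa [Real.dist_eq] using hu
      obtain ⟨r, hr, hball⟩ := Metric.eventually_nhds_iff.mp hev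
      have hsub : ∀ᶠ s in 𝓝 s₀, ∀ u ∈ Ι s₀ s, |q u - 1| < min (c/2) (1/2) := by
        filter_upwards [Metric.ball_mem_nhds s₀ hr] with s hs u hu
        rw [Metric.mem_ball, Real.dist_eq] at hs
        obtain ⟨hs1, hs2⟩ := abs_lt.mp hs
        apply hball
        rw [Real.dist_eq, abs_lt]
        rw [Set.mem_uIoc] at hu
        rcases hu with ⟨h1, h2⟩ | ⟨h1, h2⟩
        · constructor <;> linarith
        · constructor <;> linarith
      filter_upwards [hsub] with s hs
      have hbound : ∀ᵐ t ∂(volume.restrict (Ι s₀ s)),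
          ‖κ t * (1 - q t)‖ ≤ c * (κ t * q t) := by
        refine (ae_restrict_mem measurableSet_uIoc).mono fun u hu => ?_
        have h1 := hs u hu
        have hq1 : 1/2 < q u := by
          have := (abs_lt.mp (lt_of_lt_of_le h1 (min_le_right _ _))).1
          linarith
        have h2 : |1 - q u| ≤ c/2 := by
          rw [abs_sub_comm]
          exact le_of_lt (lt_of_lt_of_le h1 (min_le_left _ _))
        have hκu := hκ u
        rw [Real.norm_eq_abs, abs_mul, abs_of_pos hκu]
        calc κ u * |1 - q u| ≤ κ u * (c/2) := by
              exact mul_le_mul_of_nonneg_left h2 hκu.le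
          _ ≤ c * (κ u * q u) := by nlinarith [mul_le_mul_of_nonneg_left hq1.le (mul_pos hc hκu).le]
      have hle := intervalIntegral.norm_integral_le_abs_of_norm_le hbound ((hIq s₀ s).const_mul c)
      rw [intervalIntegral.integral_const_mul, hftc s] at hle
      calc ‖∫ u in s₀..s, κ u * (1 - q u)‖ ≤ |c * (m s - m s₀)| := hle
        _ = c * ‖m s - m s₀‖ := by
            rw [abs_mul, abs_of_pos hc, Real.norm_eq_abs]
    have h2 := h2b.trans_isBigO h2a
    have heq : (fun s => (∫ u in s₀..s, κ u) - (∫ u in s₀..s₀, κ u) - (s - s₀) • κ s₀)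
        = fun s => (m s - m s₀ - (s - s₀) • κ s₀) + ∫ u in s₀..s, κ u * (1 - q u) := by
      funext s
      rw [intervalIntegral.integral_same, hsplit s]
      simp only [smul_eq_mul]
      ring
    rw [heq]
    exact h1.add h2
  have hrepr : (fun s : ℝ => ∫ u in (0:ℝ)..s, κ u)
      = fun s => (∫ u in (0:ℝ)..s₀, κ u) + ∫ u in s₀..s, κ u := by
    funext s
    rw [intervalIntegral.integral_add_adjacent_intervals (hglob 0 s₀) (hglob s₀ s)]
  rw [hrepr]
  exact HasDerivAt.const_add _ hG

theorem stmt_13 (α T N B β : ℝ → EuclideanSpace ℝ (Fin 3)) (κ τ φ κbar τbar : ℝ → ℝ)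
    (hα : ∀ s, HasDerivAt α (T s) s)
    (hT : ∀ s, ‖T s‖ = 1) (hN : ∀ s, ‖N s‖ = 1) (hB : ∀ s, ‖B s‖ = 1)
    (hTN : ∀ s, ⟪T s, N s⟫ = 0) (hTB : ∀ s, ⟪T s, B s⟫ = 0)
    (hNB : ∀ s, ⟪N s, B s⟫ = 0)
    (hκ : ∀ s, 0 < κ s) (hτ : ∀ s, 0 < τ s)
    (hT' : ∀ s, HasDerivAt T (κ s • N s) s)
    (hN' : ∀ s, HasDerivAt N ((-κ s) • T s + τ s • B s) s)
    (hB' : ∀ s, HasDerivAt B ((-τ s) • N s) s)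
    (hφ : ∀ s, φ s = ∫ u in (0:ℝ)..s, κ u)
    (hcos : ∀ s, 0 < Real.cos (φ s))
    (hβ : ∀ s, HasDerivAt β (Real.sin (φ s) • T s + Real.cos (φ s) • N s) s)
    (hκbar : ∀ s, κbar s = τ s * Real.cos (φ s))
    (hτbar : ∀ s, τbar s = τ s * Real.sin (φ s)) :
    (∀ s, κ s / τ s = (κbar s ^ 2 / (κbar s ^ 2 + τbar s ^ 2) ^ ((3:ℝ)/2)) *
        deriv (fun u => τbar u / κbar u) s) ∧
    ((∃ c : ℝ, ∀ s, τ s / κ s = c) ↔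
      (∃ c : ℝ, ∀ s, (κbar s ^ 2 / (κbar s ^ 2 + τbar s ^ 2) ^ ((3:ℝ)/2)) *
        deriv (fun u => τbar u / κbar u) s = c)) := by
  have hφfun : φ = fun s => ∫ u in (0:ℝ)..s, κ u := funext hφ
  have hφ' : ∀ s, HasDerivAt φ (κ s) s := by
    rw [hφfun]; exact fun s => frenet_phi_deriv hN hκ hT' hN' s
  have hfun : (fun u => τbar u / κbar u) = fun u => Real.tan (φ u) := by
    funext u
    rw [hτbar, hκbar, Real.tan_eq_sin_div_cos, mul_comm (τ u) (Real.sin (φ u)),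
      mul_comm (τ u) (Real.cos (φ u)), mul_div_mul_right _ _ (ne_of_gt (hτ u))]
  have hd : ∀ s, deriv (fun u => τbar u / κbar u) s = κ s / Real.cos (φ s) ^ 2 := by
    intro s
    rw [hfun]
    have h1 : HasDerivAt (fun u => Real.tan (φ u)) (1 / Real.cos (φ s) ^ 2 * κ s) s :=
      (Real.hasDerivAt_tan (ne_of_gt (hcos s))).comp s (hφ' s)
    rw [h1.deriv]; ring
  have key : ∀ s, κ s / τ s = (κbar s ^ 2 / (κbar s ^ 2 + τbar s ^ 2) ^ ((3:ℝ)/2)) *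
      deriv (fun u => τbar u / κbar u) s := by
    intro s
    rw [hd s, hκbar, hτbar]
    have hcs := hcos s
    have hts := hτ s
    have hcs' : Real.cos (φ s) ≠ 0 := ne_of_gt hcs
    have hts' : τ s ≠ 0 := ne_of_gt hts
    have hpow : (τ s * Real.cos (φ s)) ^ 2 + (τ s * Real.sin (φ s)) ^ 2 = τ s ^ 2 := by
      have h := Real.sin_sq_add_cos_sq (φ s)
      nlinarith [h]
    rw [hpow]
    have h32 : (τ s ^ 2 : ℝ) ^ ((3:ℝ)/2) = τ s ^ (3:ℕ) := by
      rw [← Real.rpow_natCast (τ s) 2, ← Real.rpow_mul hts.le, ← Real.rpow_natCast (τ s) 3]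
      norm_num
    rw [h32, mul_pow]
    field_simp
  refine ⟨key, ?_, ?_⟩
  · rintro ⟨c, hc⟩
    refine ⟨c⁻¹, fun s => ?_⟩
    rw [← key s, ← hc s, ← one_div, one_div_div]
  · rintro ⟨c, hc⟩
    refine ⟨c⁻¹, fun s => ?_⟩
    have h2 : κ s / τ s = c := by rw [key s, hc s]
    rw [← h2, ← one_div, one_div_div]
end

section
/- Let α : ℝ → ℝ³ be a unit-speed Frenet curve with frame (T, N, B), κ > 0, and suppose smooth functions a, b, c with a² + b² + c² = 1 are such that the integral curve β of X = aT + bN + cB has principal normal N̄ = N (the principal normal of α) with nonvanishing curvature κ̄. Then b ≡ 0 and a, c are constants; hence X = cos(θ)T + sin(θ)B for some constant angle θ. -/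
open Real
open scoped RealInnerProductSpace

theorem stmt_14 (α T N B β : ℝ → EuclideanSpace ℝ (Fin 3)) (κ τ a b c κbar : ℝ → ℝ)
    (hα : ∀ s, HasDerivAt α (T s) s)
    (hT : ∀ s, ‖T s‖ = 1) (hN : ∀ s, ‖N s‖ = 1) (hB : ∀ s, ‖B s‖ = 1)
    (hTN : ∀ s, ⟪T s, N s⟫ = 0) (hTB : ∀ s, ⟪T s, B s⟫ = 0)
    (hNB : ∀ s, ⟪N s, B s⟫ = 0)
    (hκ : ∀ s, 0 < κ s)
    (hT' : ∀ s, HasDerivAt T (κ s • N s) s)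
    (hN' : ∀ s, HasDerivAt N ((-κ s) • T s + τ s • B s) s)
    (hB' : ∀ s, HasDerivAt B ((-τ s) • N s) s)
    (ha : ContDiff ℝ (⊤ : ℕ∞) a) (hb : ContDiff ℝ (⊤ : ℕ∞) b) (hc : ContDiff ℝ (⊤ : ℕ∞) c)
    (hunit : ∀ s, a s ^ 2 + b s ^ 2 + c s ^ 2 = 1)
    (hβ : ∀ s, HasDerivAt β (a s • T s + b s • N s + c s • B s) s)
    (hβ'' : ∀ s, HasDerivAt (fun u => a u • T u + b u • N u + c u • B u)
      (κbar s • N s) s)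
    (hκbar : ∀ s, κbar s ≠ 0) :
    (∀ s, b s = 0) ∧ ∃ θ : ℝ, ∀ s, a s = Real.cos θ ∧ c s = Real.sin θ := by
  have hT1 : ∀ s, ⟪T s, T s⟫ = 1 := fun s => by
    rw [real_inner_self_eq_norm_sq, hT s]; norm_num
  have hN1 : ∀ s, ⟪N s, N s⟫ = 1 := fun s => by
    rw [real_inner_self_eq_norm_sq, hN s]; norm_num
  have hB1 : ∀ s, ⟪B s, B s⟫ = 1 := fun s => by
    rw [real_inner_self_eq_norm_sq, hB s]; norm_num
  have hNT : ∀ s, ⟪N s, T s⟫ = 0 := fun s => by rw [real_inner_comm]; exact hTN s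
  have hBT : ∀ s, ⟪B s, T s⟫ = 0 := fun s => by rw [real_inner_comm]; exact hTB s
  have hBN : ∀ s, ⟪B s, N s⟫ = 0 := fun s => by rw [real_inner_comm]; exact hNB s
  have hda : ∀ s, HasDerivAt a (deriv a s) s := fun s =>
    ((ha.differentiable (by simp)) s).hasDerivAt
  have hdb : ∀ s, HasDerivAt b (deriv b s) s := fun s =>
    ((hb.differentiable (by simp)) s).hasDerivAt
  have hdc : ∀ s, HasDerivAt c (deriv c s) s := fun s =>
    ((hc.differentiable (by simp)) s).hasDerivAt
  have key : ∀ s, κbar s • N s =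
      (deriv a s - b s * κ s) • T s + (deriv b s + a s * κ s - c s * τ s) • N s
        + (deriv c s + b s * τ s) • B s := by
    intro s
    have h1 := (((hda s).smul (hT' s)).add ((hdb s).smul (hN' s))).add
      ((hdc s).smul (hB' s))
    have h2 := (hβ'' s).unique h1
    rw [h2]
    module
  have eqT : ∀ s, deriv a s = b s * κ s := by
    intro s
    have h := congrArg (fun v => ⟪T s, v⟫) (key s)
    simp only [inner_add_right, real_inner_smul_right, hT1, hTN, hTB] at h
    nlinarith [h]
  have eqN : ∀ s, deriv b s + a s * κ s - c s * τ s = κbar s := by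
    intro s
    have h := congrArg (fun v => ⟪N s, v⟫) (key s)
    simp only [inner_add_right, real_inner_smul_right, hN1, hNT, hNB] at h
    nlinarith [h]
  have eqB : ∀ s, deriv c s = -(b s * τ s) := by
    intro s
    have h := congrArg (fun v => ⟪B s, v⟫) (key s)
    simp only [inner_add_right, real_inner_smul_right, hB1, hBT, hBN] at h
    nlinarith [h]
  have hbz : ∀ s, b s = 0 := by
    intro s
    have hq : HasDerivAt (fun u => a u ^ 2 + b u ^ 2 + c u ^ 2)
        (2 * a s * deriv a s + 2 * b s * deriv b s + 2 * c s * deriv c s) s := by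
      have h := (((hda s).pow 2).add ((hdb s).pow 2)).add ((hdc s).pow 2)
      refine h.congr_deriv ?_
      ring
    have h0 : HasDerivAt (fun u => a u ^ 2 + b u ^ 2 + c u ^ 2) 0 s := by
      have he : (fun u => a u ^ 2 + b u ^ 2 + c u ^ 2) = fun _ => (1 : ℝ) :=
        funext hunit
      rw [he]
      exact hasDerivAt_const s 1
    have huniq := hq.unique h0
    have hbk : b s * κbar s = 0 := by
      have e1 := eqT s; have e2 := eqN s; have e3 := eqB s
      linear_combination (-(b s)) * e2 + (1/2 : ℝ) * huniq - a s * e1 - c s * e3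
    rcases mul_eq_zero.mp hbk with h | h
    · exact h
    · exact absurd h (hκbar s)
  refine ⟨hbz, ?_⟩
  have hda0 : ∀ s, deriv a s = 0 := fun s => by rw [eqT s, hbz s]; ring
  have hdc0 : ∀ s, deriv c s = 0 := fun s => by rw [eqB s, hbz s]; ring
  have hac : ∀ s, a s = a 0 := fun s =>
    is_const_of_deriv_eq_zero (ha.differentiable (by simp)) hda0 s 0
  have hcc : ∀ s, c s = c 0 := fun s =>
    is_const_of_deriv_eq_zero (hc.differentiable (by simp)) hdc0 s 0
  have hsum : a 0 ^ 2 + c 0 ^ 2 = 1 := by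
    have := hunit 0
    rw [hbz 0] at this
    linarith [this]
  have ha1 : a 0 ∈ Set.Icc (-1 : ℝ) 1 := by
    constructor <;> nlinarith [sq_nonneg (c 0)]
  have hsin : Real.sin (Real.arccos (a 0)) = |c 0| := by
    rw [Real.sin_arccos]
    rw [show 1 - a 0 ^ 2 = c 0 ^ 2 by linarith]
    exact Real.sqrt_sq_eq_abs _
  by_cases hc0 : 0 ≤ c 0
  · refine ⟨Real.arccos (a 0), fun s => ⟨?_, ?_⟩⟩
    · rw [hac s, Real.cos_arccos ha1.1 ha1.2]
    · rw [hcc s, hsin, abs_of_nonneg hc0]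
  · refine ⟨-Real.arccos (a 0), fun s => ⟨?_, ?_⟩⟩
    · rw [hac s, Real.cos_neg, Real.cos_arccos ha1.1 ha1.2]
    · rw [hcc s, Real.sin_neg, hsin, abs_of_neg (lt_of_not_ge hc0)]
      ring
end

section
/- Let κ, τ : ℝ → ℝ be smooth with κ > 0, θ constant with κ̄ := κ cos θ − τ sin θ > 0, and τ̄ := κ sin θ + τ cos θ. Then (κ²/(κ²+τ²)^{3/2})·(τ/κ)' = (κ̄²/(κ̄²+τ̄²)^{3/2})·(τ̄/κ̄)'. Consequently, the slant-helix invariant σ is preserved under passage to the Bertrand-direction curve; in particular α is a slant helix iff its Bertrand-direction curve is a slant helix. -/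
open Real

theorem stmt_17 (κ τ κbar τbar : ℝ → ℝ) (θ : ℝ)
    (hκs : ContDiff ℝ (⊤ : ℕ∞) κ) (hτs : ContDiff ℝ (⊤ : ℕ∞) τ)
    (hκ : ∀ s, 0 < κ s)
    (hκbar : ∀ s, κbar s = κ s * Real.cos θ - τ s * Real.sin θ)
    (hκbarpos : ∀ s, 0 < κbar s)
    (hτbar : ∀ s, τbar s = κ s * Real.sin θ + τ s * Real.cos θ) :
    (∀ s, (κ s ^ 2 / (κ s ^ 2 + τ s ^ 2) ^ ((3:ℝ)/2)) *
        deriv (fun u => τ u / κ u) s =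
      (κbar s ^ 2 / (κbar s ^ 2 + τbar s ^ 2) ^ ((3:ℝ)/2)) *
        deriv (fun u => τbar u / κbar u) s) ∧
    ((∃ c : ℝ, ∀ s, (κ s ^ 2 / (κ s ^ 2 + τ s ^ 2) ^ ((3:ℝ)/2)) *
        deriv (fun u => τ u / κ u) s = c) ↔
     (∃ c : ℝ, ∀ s, (κbar s ^ 2 / (κbar s ^ 2 + τbar s ^ 2) ^ ((3:ℝ)/2)) *
        deriv (fun u => τbar u / κbar u) s = c)) := by
  have hκd : Differentiable ℝ κ := hκs.differentiable (by simp)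
  have hτd : Differentiable ℝ τ := hτs.differentiable (by simp)
  have eκ : κbar = fun u => κ u * Real.cos θ - τ u * Real.sin θ := funext hκbar
  have eτ : τbar = fun u => κ u * Real.sin θ + τ u * Real.cos θ := funext hτbar
  have main : ∀ s, (κ s ^ 2 / (κ s ^ 2 + τ s ^ 2) ^ ((3:ℝ)/2)) *
        deriv (fun u => τ u / κ u) s =
      (κbar s ^ 2 / (κbar s ^ 2 + τbar s ^ 2) ^ ((3:ℝ)/2)) *
        deriv (fun u => τbar u / κbar u) s := by
    intro s
    have hκne : κ s ≠ 0 := (hκ s).ne'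
    have hκbne : κ s * Real.cos θ - τ s * Real.sin θ ≠ 0 := by
      have := hκbarpos s; rw [hκbar s] at this; exact this.ne'
    have h1 : HasDerivAt κ (deriv κ s) s := (hκd s).hasDerivAt
    have h2 : HasDerivAt τ (deriv τ s) s := (hτd s).hasDerivAt
    have hd1 : HasDerivAt (fun u => τ u / κ u)
        ((deriv τ s * κ s - τ s * deriv κ s) / κ s ^ 2) s := h2.div h1 hκne
    have hd2 : HasDerivAt (fun u => (κ u * Real.sin θ + τ u * Real.cos θ) /
        (κ u * Real.cos θ - τ u * Real.sin θ))
        (((deriv κ s * Real.sin θ + deriv τ s * Real.cos θ) *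
            (κ s * Real.cos θ - τ s * Real.sin θ) -
          (κ s * Real.sin θ + τ s * Real.cos θ) *
            (deriv κ s * Real.cos θ - deriv τ s * Real.sin θ)) /
          (κ s * Real.cos θ - τ s * Real.sin θ) ^ 2) s :=
      ((h1.mul_const _).add (h2.mul_const _)).div
        ((h1.mul_const _).sub (h2.mul_const _)) hκbne
    rw [hd1.deriv]
    rw [eκ, eτ]
    rw [hd2.deriv]
    have hS : (κ s * Real.cos θ - τ s * Real.sin θ) ^ 2 +
        (κ s * Real.sin θ + τ s * Real.cos θ) ^ 2 = κ s ^ 2 + τ s ^ 2 := by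
      have := Real.sin_sq_add_cos_sq θ
      nlinarith [this]
    rw [hS]
    have hSne : (κ s ^ 2 + τ s ^ 2) ^ ((3:ℝ)/2) ≠ 0 := by
      apply (Real.rpow_pos_of_pos _ _).ne'
      positivity
    have hnum : (deriv κ s * Real.sin θ + deriv τ s * Real.cos θ) *
            (κ s * Real.cos θ - τ s * Real.sin θ) -
          (κ s * Real.sin θ + τ s * Real.cos θ) *
            (deriv κ s * Real.cos θ - deriv τ s * Real.sin θ) =
        deriv τ s * κ s - τ s * deriv κ s := by
      linear_combination (deriv τ s * κ s - τ s * deriv κ s) * Real.sin_sq_add_cos_sq θ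
    rw [hnum]
    field_simp
  refine ⟨main, ?_⟩
  constructor
  · rintro ⟨c, hc⟩
    exact ⟨c, fun s => (main s).symm.trans (hc s)⟩
  · rintro ⟨c, hc⟩
    exact ⟨c, fun s => (main s).trans (hc s)⟩
end
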